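/- Let α be a nonzero real number and let Y be the matrix with rows (0, 1) and (1, 0). Then the adjoint orbit of αY under G = SL(2,ℝ), namely { g(αY)g⁻¹ : g ∈ SL(2,ℝ) }, equals the one-sheeted hyperboloid { F(x,y,z) : x, y, z ∈ ℝ, x² + y² − z² = α² }. -/

import Mathlib

/-- The matrix `F(x,y,z)` with rows `(x, y+z)` and `(y−z, −x)`, an element of `𝔰𝔩(2,ℝ)`. -/
def F (x y z : ℝ) : Matrix (Fin 2) (Fin 2) ℝ := !![x, y + z; y - z, -x]

/-- `Y` is the matrix with rows `(0, 1)` and `(1, 0)`. -/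
def Y : Matrix (Fin 2) (Fin 2) ℝ := !![0, 1; 1, 0]

/-!
The hyperboloid `x² + y² − z² = α²` is exactly the set of trace-zero matrices of determinant
`−α²`, and these invariants are preserved by conjugation. Conversely, every such matrix `A`
satisfies `A² = α² = (αY)²`, so `P = A M + M (αY)` intertwines `A` with `αY` for every `M`.
For `M = 1` or `M = diag(1, −1)` this `P` is invertible, and multiplying it by a suitable
element `u + vY` of the centralizer of `Y` brings its determinant to `1`.
-/

open Matrix

theorem mul_add_mul_intertwines {R : Type*} [Ring R] {A B : R} (M : R) (hAB : A * A = B * B)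
    (hM : Commute (B * B) M) : A * (A * M + M * B) = (A * M + M * B) * B :=
  calc A * (A * M + M * B) = A * A * M + A * M * B := by noncomm_ring
    _ = M * (B * B) + A * M * B := by rw [hAB, hM.eq]
    _ = (A * M + M * B) * B := by noncomm_ring

namespace Matrix.SpecialLinearGroup

variable {n R : Type*} [Fintype n] [DecidableEq n] [CommRing R]

theorem trace_conj (g : SpecialLinearGroup n R) (B : Matrix n n R) :
    trace ((g : Matrix n n R) * B * ((g⁻¹ : SpecialLinearGroup n R) : Matrix n n R)) = trace B := by
  rw [trace_mul_cycle, ← coe_mul, inv_mul_cancel, coe_one, one_mul]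

theorem det_conj (g : SpecialLinearGroup n R) (B : Matrix n n R) :
    det ((g : Matrix n n R) * B * ((g⁻¹ : SpecialLinearGroup n R) : Matrix n n R)) = det B := by
  simp only [det_mul, det_coe, one_mul, mul_one]

theorem eq_conj_of_mul_eq_mul {g : SpecialLinearGroup n R} {A B : Matrix n n R}
    (h : A * (g : Matrix n n R) = g * B) :
    A = g * B * ((g⁻¹ : SpecialLinearGroup n R) : Matrix n n R) := by
  rw [← h, mul_assoc, ← coe_mul, mul_inv_cancel, coe_one, mul_one]

end Matrix.SpecialLinearGroup

section Hyperboloid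

variable (x y z α : ℝ)

theorem trace_F : (F x y z).trace = 0 := by
  rw [F, trace_fin_two_of, add_neg_cancel]

theorem det_F : (F x y z).det = -(x ^ 2 + y ^ 2 - z ^ 2) := by
  rw [F, det_fin_two_of]
  ring

theorem F_mul_self : F x y z * F x y z = (x ^ 2 + y ^ 2 - z ^ 2) • 1 := by
  ext i j
  fin_cases i <;> fin_cases j <;> simp [F] <;> ring

theorem smul_Y : α • Y = F 0 α 0 := by
  ext i j
  fin_cases i <;> fin_cases j <;> simp [F, Y]

theorem eq_F_of_trace_eq_zero {A : Matrix (Fin 2) (Fin 2) ℝ} (h : A.trace = 0) :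
    A = F (A 0 0) ((A 0 1 + A 1 0) / 2) ((A 0 1 - A 1 0) / 2) := by
  rw [trace_fin_two] at h
  ext i j
  fin_cases i <;> fin_cases j <;> simp [F] <;> linarith

theorem exists_eq_F_iff (A : Matrix (Fin 2) (Fin 2) ℝ) :
    (∃ x y z : ℝ, x ^ 2 + y ^ 2 - z ^ 2 = α ^ 2 ∧ A = F x y z) ↔
      A.trace = 0 ∧ A.det = -α ^ 2 := by
  constructor
  · rintro ⟨x, y, z, h, rfl⟩
    rw [trace_F, det_F, h]
    exact ⟨rfl, rfl⟩
  · rintro ⟨htr, hdet⟩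
    have hA := eq_F_of_trace_eq_zero htr
    rw [hA, det_F] at hdet
    exact ⟨_, _, _, by linarith, hA⟩

theorem F_add_smul_Y : F x y z + α • Y = F x (y + α) z := by
  rw [smul_Y]
  ext i j
  fin_cases i <;> fin_cases j <;> simp [F] <;> ring

theorem F_mul_diag_add_diag_mul_smul_Y :
    F x y z * !![1, 0; 0, -1] + !![1, 0; 0, -1] * (α • Y) =
      !![x, α - y - z; y - z - α, x] := by
  ext i j
  fin_cases i <;> fin_cases j <;> simp [F, Y] <;> ring

theorem det_smul_one_add_smul_Y (u v : ℝ) : (u • 1 + v • Y).det = u ^ 2 - v ^ 2 := by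
  have hC : u • 1 + v • Y = !![u, v; v, u] := by
    ext i j
    fin_cases i <;> fin_cases j <;> simp [Y]
  rw [hC, det_fin_two_of]
  ring

end Hyperboloid

section Intertwiner

variable {x y z α : ℝ}

theorem exists_F_mul_eq_mul_smul_Y (hα : α ≠ 0) (h : x ^ 2 + y ^ 2 - z ^ 2 = α ^ 2) :
    ∃ P : Matrix (Fin 2) (Fin 2) ℝ, P.det ≠ 0 ∧ F x y z * P = P * (α • Y) := by
  have hsq : F x y z * F x y z = α • Y * (α • Y) := by
    rw [smul_Y, F_mul_self, F_mul_self, h]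
    norm_num
  have hcentral (M : Matrix (Fin 2) (Fin 2) ℝ) : Commute (α • Y * (α • Y)) M := by
    rw [smul_Y, F_mul_self]
    exact (Commute.one_left M).smul_left _
  by_cases hy : y = -α
  · refine ⟨_, ?_, mul_add_mul_intertwines !![1, 0; 0, -1] hsq (hcentral _)⟩
    have hdet : x * x - (α - y - z) * (y - z - α) = 4 * α ^ 2 := by
      subst hy
      linear_combination h
    rw [F_mul_diag_add_diag_mul_smul_Y, det_fin_two_of, hdet]
    positivity
  · refine ⟨_, ?_, mul_add_mul_intertwines 1 hsq (hcentral _)⟩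
    have hdet : -(x ^ 2 + (y + α) ^ 2 - z ^ 2) = -2 * α * (α + y) := by
      linear_combination -h
    have hαy : α + y ≠ 0 := fun h0 => hy (by linarith)
    rw [mul_one, one_mul, F_add_smul_Y, det_F, hdet]
    positivity

theorem exists_SL_mul_eq_mul_smul_Y {A P : Matrix (Fin 2) (Fin 2) ℝ} (hP : P.det ≠ 0)
    (hAP : A * P = P * (α • Y)) :
    ∃ g : SpecialLinearGroup (Fin 2) ℝ, A * (g : Matrix (Fin 2) (Fin 2) ℝ) = g * (α • Y) := by
  -- `C = u + vY` commutes with `Y`, and `det C = u² − v² = (u + v)(u − v) = (det P)⁻¹`.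
  set C : Matrix (Fin 2) (Fin 2) ℝ := ((1 + P.det⁻¹) / 2) • 1 + ((1 - P.det⁻¹) / 2) • Y
  have hC : Commute (α • Y) C :=
    (((Commute.one_right Y).smul_right _).add_right ((Commute.refl Y).smul_right _)).smul_left α
  have hdet : (P * C).det = 1 := by
    rw [det_mul, det_smul_one_add_smul_Y]
    field_simp
    ring
  refine ⟨⟨P * C, hdet⟩, ?_⟩
  change A * (P * C) = P * C * (α • Y)
  rw [← mul_assoc, hAP, mul_assoc, hC.eq, mul_assoc]

end Intertwiner

/-- For a nonzero real number `α`, the adjoint `SL(2,ℝ)`-orbit of `αY` is the one-sheeted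
hyperboloid `{F(x,y,z) : x² + y² − z² = α²}`. -/
theorem adjoint_orbit_Y (α : ℝ) (hα : α ≠ 0) :
    {A : Matrix (Fin 2) (Fin 2) ℝ | ∃ g : Matrix.SpecialLinearGroup (Fin 2) ℝ,
        A = (g : Matrix (Fin 2) (Fin 2) ℝ) * (α • Y) * ((g⁻¹ : Matrix.SpecialLinearGroup (Fin 2) ℝ) : Matrix (Fin 2) (Fin 2) ℝ)} =
    {A : Matrix (Fin 2) (Fin 2) ℝ |
        ∃ x y z : ℝ, x ^ 2 + y ^ 2 - z ^ 2 = α ^ 2 ∧ A = F x y z} := by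
  ext A
  constructor
  · rintro ⟨g, rfl⟩
    rw [Set.mem_ofPred_eq, exists_eq_F_iff, SpecialLinearGroup.trace_conj,
      SpecialLinearGroup.det_conj, smul_Y, trace_F, det_F]
    exact ⟨rfl, by ring⟩
  · rintro ⟨x, y, z, h, rfl⟩
    obtain ⟨P, hP, hFP⟩ := exists_F_mul_eq_mul_smul_Y hα h
    obtain ⟨g, hg⟩ := exists_SL_mul_eq_mul_smul_Y hP hFP
    exact ⟨g, SpecialLinearGroup.eq_conj_of_mul_eq_mul hg⟩
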